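/- Let A be an n×n complex matrix of index k and let m ≥ 1 be an integer with k < 2m. Then A^{#_m} A^m = A^d A^m, where A^d is the Drazin inverse of A. -/

import Mathlib

open Matrix

/-- `X` is the Moore–Penrose inverse of `A` (four Penrose equations). -/
def MoorePenroseOf {n : ℕ} (A X : Matrix (Fin n) (Fin n) ℂ) : Prop :=
  A * X * A = A ∧ X * A * X = X ∧ (A * X)ᴴ = A * X ∧ (X * A)ᴴ = X * A

/-- Column space of a square complex matrix. -/
noncomputable def colSpace {n : ℕ} (A : Matrix (Fin n) (Fin n) ℂ) : Submodule ℂ (Fin n → ℂ) :=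
  LinearMap.range A.mulVecLin

/-- Null space of a square complex matrix. -/
noncomputable def nullSpace {n : ℕ} (A : Matrix (Fin n) (Fin n) ℂ) : Submodule ℂ (Fin n → ℂ) :=
  LinearMap.ker A.mulVecLin

/-- `k` is the index of `A`: the smallest nonnegative integer with
`rank(A^k) = rank(A^(k+1))`. -/
def HasIndex {n : ℕ} (A : Matrix (Fin n) (Fin n) ℂ) (k : ℕ) : Prop :=
  (A ^ k).rank = (A ^ (k + 1)).rank ∧ ∀ j < k, (A ^ j).rank ≠ (A ^ (j + 1)).rank

/-- `X` is the core-EP inverse of `A` (where `k = Ind(A)`): `XAX = X` and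
`R(X) = R(Xᴴ) = R(A^k)`. -/
def IsCoreEP {n : ℕ} (A X : Matrix (Fin n) (Fin n) ℂ) (k : ℕ) : Prop :=
  X * A * X = X ∧ colSpace X = colSpace (A ^ k) ∧ colSpace Xᴴ = colSpace (A ^ k)

/-!
Since `R(A^k) = R(A^{k+1})`, we can write `A^k = A^{k+1} W`. Both the core-EP inverse `X` and the
Drazin inverse `D` are left inverses of `A` on `A^k` (`X A^{k+1} = A^k = D A^{k+1}`), hence
`X A^k = A^k W = D A^k`, and by induction `X^r A^k = D^r A^k` for every `r`. As `A^m A^† A^m = A^m`,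
the left-hand side is `X^{m+1} A^{2m}`; because `k ≤ 2m` this equals `D^{m+1} A^{2m}`, and
`D^{m+1} A^m = D` finishes the proof.
-/

section Monoid

variable {M : Type*} [Monoid M]

theorem pow_mul_pow_eq_of_mul_pow_succ_eq {a w y z : M} {k : ℕ} (hw : a ^ k = a ^ (k + 1) * w)
    (hy : y * a ^ (k + 1) = a ^ k) (hz : z * a ^ (k + 1) = a ^ k) (r : ℕ) :
    y ^ r * a ^ k = z ^ r * a ^ k := by
  have hw' : ∀ x : M, x * a ^ (k + 1) = a ^ k → x * a ^ k = a ^ k * w := fun x hx => by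
    conv_lhs => rw [hw, ← mul_assoc, hx]
  induction r with
  | zero => simp
  | succ r ih =>
    calc y ^ (r + 1) * a ^ k = y ^ r * a ^ k * w := by rw [pow_succ, mul_assoc, hw' y hy, mul_assoc]
      _ = z ^ r * a ^ k * w := by rw [ih]
      _ = z ^ (r + 1) * a ^ k := by rw [mul_assoc, ← hw' z hz, ← mul_assoc, ← pow_succ]

theorem pow_succ_mul_pow_eq_self {a d : M} (hd : d * a * d = d) (hc : Commute a d)
    (s : ℕ) : d ^ (s + 1) * a ^ s = d := by
  induction s with
  | zero => simp
  | succ s ih =>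
    calc d ^ (s + 1 + 1) * a ^ (s + 1) = d ^ (s + 1) * a ^ s * (d * a) := by
          rw [pow_succ d, pow_succ a, mul_assoc, ← mul_assoc d, ← (hc.pow_left s).eq,
            mul_assoc, mul_assoc]
      _ = d := by rw [ih, ← hc.eq, ← mul_assoc, hd]

end Monoid

section ColSpace

variable {n : ℕ}

theorem exists_eq_mul_of_colSpace_le {B C : Matrix (Fin n) (Fin n) ℂ}
    (h : colSpace B ≤ colSpace C) : ∃ W, B = C * W := by
  have hcol : ∀ j, B.mulVec (Pi.single j 1) ∈ colSpace C := fun j => h ⟨_, rfl⟩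
  choose w hw using hcol
  refine ⟨Matrix.of fun i j => w j i, ?_⟩
  ext i j
  have := congrFun (hw j) i
  simp only [mulVecLin_apply, mulVec_single] at this
  simpa [mulVec, dotProduct, Matrix.mul_apply] using this.symm

theorem colSpace_mul_le (B C : Matrix (Fin n) (Fin n) ℂ) : colSpace (B * C) ≤ colSpace B := by
  rw [colSpace, colSpace, Matrix.mulVecLin_mul]
  exact LinearMap.range_comp_le_range _ _

theorem exists_pow_eq_pow_succ_mul {A : Matrix (Fin n) (Fin n) ℂ} {k : ℕ}
    (h : (A ^ k).rank = (A ^ (k + 1)).rank) : ∃ W, A ^ k = A ^ (k + 1) * W := by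
  have hle : colSpace (A ^ (k + 1)) ≤ colSpace (A ^ k) := by
    rw [pow_succ]
    exact colSpace_mul_le _ _
  exact exists_eq_mul_of_colSpace_le (Submodule.eq_of_le_of_finrank_le hle h.le).ge

theorem mul_mul_eq_of_colSpace_le {A X B : Matrix (Fin n) (Fin n) ℂ} (hX : X * A * X = X)
    (hB : colSpace B ≤ colSpace X) : X * A * B = B := by
  obtain ⟨V, rfl⟩ := exists_eq_mul_of_colSpace_le hB
  rw [← mul_assoc, hX]

theorem IsCoreEP.mul_pow_succ {A X : Matrix (Fin n) (Fin n) ℂ} {k : ℕ} (hX : IsCoreEP A X k) :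
    X * A ^ (k + 1) = A ^ k := by
  rw [pow_succ', ← mul_assoc]
  exact mul_mul_eq_of_colSpace_le hX.1 hX.2.1.ge

end ColSpace

theorem stmt_16_general {n k m : ℕ} (hkm : k < 2 * m)
    (A CEP AmDag D : Matrix (Fin n) (Fin n) ℂ)
    (hInd : HasIndex A k)
    (hCEP : IsCoreEP A CEP k)
    (hMP : MoorePenroseOf (A ^ m) AmDag)
    (hD1 : D * A * D = D)
    (hD2 : A * D = D * A)
    (hD3 : D * A ^ (k + 1) = A ^ k) :
    CEP ^ (m + 1) * A ^ m * (A ^ m * AmDag) * A ^ m = D * A ^ m := by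
  obtain ⟨W, hW⟩ := exists_pow_eq_pow_succ_mul hInd.1
  have hpow := pow_mul_pow_eq_of_mul_pow_succ_eq hW hCEP.mul_pow_succ hD3 (m + 1)
  obtain ⟨j, hj⟩ := Nat.exists_eq_add_of_le hkm.le
  calc CEP ^ (m + 1) * A ^ m * (A ^ m * AmDag) * A ^ m
      = CEP ^ (m + 1) * A ^ k * A ^ j := by
        rw [mul_assoc, hMP.1, mul_assoc, mul_assoc, ← pow_add, ← pow_add, ← two_mul, hj]
    _ = D ^ (m + 1) * A ^ m * A ^ m := by
        rw [hpow, mul_assoc, mul_assoc, ← pow_add, ← pow_add, ← hj, two_mul]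
    _ = D * A ^ m := by rw [pow_succ_mul_pow_eq_self hD1 hD2 m]

/-- if `k < 2m` then `A^{#_m} A^m = A^d A^m`. -/
theorem stmt_16 {n k m : ℕ} (hm : 1 ≤ m) (hkm : k < 2 * m)
    (A CEP AmDag D : Matrix (Fin n) (Fin n) ℂ)
    (hInd : HasIndex A k)
    (hCEP : IsCoreEP A CEP k)
    (hMP : MoorePenroseOf (A ^ m) AmDag)
    (hD1 : D * A * D = D)
    (hD2 : A * D = D * A)
    (hD3 : D * A ^ (k + 1) = A ^ k) :
    CEP ^ (m + 1) * A ^ m * (A ^ m * AmDag) * A ^ m = D * A ^ m :=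
  stmt_16_general hkm A CEP AmDag D hInd hCEP hMP hD1 hD2 hD3
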